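/- Let d ≥ 3 be odd and λ a strict partition. Then the number of bar lengths of λ divisible by d equals |q̄_d(λ)|/d, i.e. d times the number of bars of length divisible by d equals the size of the d̄-quotient partition. -/

import Mathlib

namespace BarPartitions

/-- A strict (bar) partition given as a strictly decreasing list of positive integers. -/
def IsStrictList (l : List ℕ) : Prop := l.Chain' (· > ·) ∧ ∀ a ∈ l, 0 < a

/-- The multiset of bar lengths of a strict partition `l = (a₁ > ... > a_m)`:
`⋃ᵢ ({1,…,aᵢ} ∪ {aᵢ + aⱼ : j > i}) \ {aᵢ - aⱼ : j > i}` as multisets. -/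
def barMultisetL (l : List ℕ) : Multiset ℕ :=
  ((List.range l.length).map (fun i =>
      ((Multiset.range (l.getD i 0)).map (· + 1))
      + ((l.drop (i + 1)).map (fun b => l.getD i 0 + b) : Multiset ℕ))).sum
  - ((List.range l.length).map (fun i =>
      ((l.drop (i + 1)).map (fun b => l.getD i 0 - b) : Multiset ℕ))).sum

/-- The doubled partition `D(λ)` with Frobenius coordinates `(a₁,…,a_m | a₁-1,…,a_m-1)`:
row `i` (0-indexed, `i < m`) has `aᵢ + i + 1` cells; the remaining rows are given by the
column lengths `c + a_c` (0-indexed column `c < m`). -/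
def doubledP (l : List ℕ) : List ℕ :=
  (List.range l.length).map (fun i => l.getD i 0 + i + 1) ++
  (List.range (l.headD 0 - l.length)).map (fun k =>
    ((List.range l.length).filter (fun c => l.length + k + 1 ≤ c + l.getD c 0)).length)

/-- Length of column `c` of the Young diagram of the partition `μ` (list of parts). -/
def colLen (μ : List ℕ) (c : ℕ) : ℕ := (μ.filter (fun p => c < p)).length

/-- Hook length of the cell `(r, c)` (0-indexed) of the partition `μ`. -/
def hookLen (μ : List ℕ) (r c : ℕ) : ℕ := (μ.getD r 0 - c) + (colLen μ c - r) - 1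

/-- The multiset of hook lengths of the partition `μ`. -/
def hookLengths (μ : List ℕ) : Multiset ℕ :=
  ((List.range μ.length).map (fun r =>
    ((Multiset.range (μ.getD r 0)).map (fun c => hookLen μ r c)))).sum

/-- d-residue of the hand node of any hook in row `r` of `μ`. -/
def handRes (d : ℕ) (μ : List ℕ) (r : ℕ) : ZMod d :=
  (((μ.getD r 0 : ℤ) - 1 - (r : ℤ) : ℤ) : ZMod d)

/-- d-residue of the foot node of any hook in column `c` of `μ`. -/
def footRes (d : ℕ) (μ : List ℕ) (c : ℕ) : ZMod d :=
  (((c : ℤ) - (colLen μ c : ℤ) + 1 : ℤ) : ZMod d)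

/-- The β-set of `μ` with `N` elements (first-column hook lengths, padded with `0` parts). -/
def betaList (μ : List ℕ) (N : ℕ) : List ℕ :=
  (List.range N).map (fun k => μ.getD k 0 + (N - 1 - k))

/-- The least multiple of `d` that is `≥ len`. -/
def minMul (d len : ℕ) : ℕ := d * ((len + d - 1) / d)

/-- Number of beads on runner `i` of the minimally normalized `d`-abacus of `μ`. -/
def beadCountL (d : ℕ) (μ : List ℕ) (i : ℕ) : ℕ :=
  ((betaList μ (minMul d μ.length)).filter (fun v => v % d = i)).length

/-! ### Finset versions: a strict partition as its finite set of (positive) parts. -/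

/-- The parts of a strict partition, sorted decreasingly. -/
def sortedParts (s : Finset ℕ) : List ℕ := (s.sort (· ≤ ·)).reverse

/-- Bead counts of the minimally normalized `d`-abacus of the doubled partition `D(λ)`,
where `λ` is the strict partition with part set `s` (as integers). -/
def beadCount (d : ℕ) (s : Finset ℕ) (i : ℕ) : ℤ :=
  (beadCountL d (doubledP (sortedParts s)) i : ℤ)

/-- The multiset of bar lengths of the strict partition with (positive) part set `s`. -/
def barMultisetF (s : Finset ℕ) : Multiset ℕ :=
  s.val.bind (fun a => ((Multiset.range a).map (· + 1)).filter (fun h => a - h ∉ s))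
  + s.val.bind (fun a => (s.filter (fun b => b < a)).val.map (fun b => a + b))

/-- Removal of one bar of length `h` from the strict partition `s`, yielding `t`:
either remove two parts `a ≠ b` with `a + b = h`, or replace a part `a` by `a - h`
(deleting it when `h = a`), provided `a - h` is not already a part. -/
def RemoveBarLen (h : ℕ) (s t : Finset ℕ) : Prop :=
  (∃ a ∈ s, ∃ b ∈ s, a ≠ b ∧ h = a + b ∧ t = (s.erase a).erase b) ∨
  (∃ a ∈ s, 0 < h ∧ h ≤ a ∧ a - h ∉ s ∧
    t = if h = a then s.erase a else insert (a - h) (s.erase a))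

/-- Removal of one bar of length divisible by `d`. -/
def RemoveDBar (d : ℕ) (s t : Finset ℕ) : Prop := ∃ h, d ∣ h ∧ RemoveBarLen h s t

/-- `c` is the `d̄`-core of `s`: obtained from `s` by removing bars of length divisible
by `d`, and admitting no further such removal. -/
def IsBarCore (d : ℕ) (s c : Finset ℕ) : Prop :=
  Relation.ReflTransGen (RemoveDBar d) s c ∧ ∀ t, ¬ RemoveDBar d c t

/-- The partition (multiset of positive parts) associated to a β-set `X`. -/
def partitionOfBetaSet (X : Finset ℕ) : Multiset ℕ :=
  (((X.sort (· ≤ ·)).zipIdx.map (fun p => p.1 - p.2) : List ℕ) : Multiset ℕ).filter (fun v => 0 < v)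

/-- Positions of the parts of `s` lying on runner `i` of the `d`-abacus. -/
def runnerSet (d i : ℕ) (s : Finset ℕ) : Finset ℕ :=
  (s.filter (fun a => a % d = i)).image (fun a => a / d)

/-- The `i`-th component (`1 ≤ i ≤ (d-1)/2`) of the `d̄`-quotient of `s`: the partition
determined by the pair of runners `(i, d - i)` via the associated charged β-set. -/
def barQuotComp (d i : ℕ) (s : Finset ℕ) : Multiset ℕ :=
  let A := runnerSet d i s
  let B := runnerSet d (d - i) s
  let N := B.sup id + 1
  partitionOfBetaSet
    ((A.image (fun a => N + a)) ∪ ((Finset.range N).filter (fun b => b ∉ B)).image (fun b => N - 1 - b))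

/-- Two strict partitions have the same `d̄`-quotient. -/
def SameBarQuotient (d : ℕ) (s t : Finset ℕ) : Prop :=
  runnerSet d 0 s = runnerSet d 0 t ∧
  ∀ i, 1 ≤ i → i ≤ (d - 1) / 2 → barQuotComp d i s = barQuotComp d i t

/-- `q` is the `d̄`-quotient partition of `s`: the unique strict partition with empty
`d̄`-core and the same `d̄`-quotient as `s`. -/
def IsBarQuotientPartition (d : ℕ) (s q : Finset ℕ) : Prop :=
  IsBarCore d q ∅ ∧ SameBarQuotient d s q

/-- The set of modified part lengths: a part `p ≡ i (mod d)` is modified to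
`|p + d(xᵢ - x₀)|`. -/
def modParts (d : ℕ) (x : ℕ → ℤ) (q : Finset ℕ) : Finset ℕ :=
  q.image (fun (p : ℕ) => ((p : ℤ) + (d : ℤ) * (x (p % d) - x 0)).natAbs)

/-- The multiset of modified bar lengths: a bar of length `h` corresponding to a bead
on runner `i` and an empty spot on runner `j` is modified to `|h + d(xᵢ - xⱼ)|`. -/
def modBarLengths (d : ℕ) (x : ℕ → ℤ) (q : Finset ℕ) : Multiset ℕ :=
  q.val.bind (fun a =>
    (((Multiset.range a).map (· + 1)).filter (fun h => a - h ∉ q)).map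
      (fun (h : ℕ) => ((h : ℤ) + (d : ℤ) * (x (a % d) - x ((a - h) % d))).natAbs))
  + q.val.bind (fun a =>
      (q.filter (fun b => b < a)).val.map
        (fun (b : ℕ) => (((a : ℤ) + (b : ℤ)) + (d : ℤ) * (x (a % d) - x ((d - b % d) % d))).natAbs))

/-!
Place the parts on a `d`-abacus: the part `i + d * x` (`i < d`) is a bead at position `x` of
runner `i`. A bar of length divisible by `d` either slides one bead down its runner into a gap,
or removes two beads from runners `i` and `d - i` (both from runner `0` when `i = 0`). Slides
count the sizes of the partitions read off the single runners, pairs of beads give the cross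
terms, and altogether the number of such bars is
`∑ (positions on runner 0) + ∑ᵢ |i-th component of the d̄-quotient|`, a function of the
`d̄`-quotient alone.

For `q` this number times `d` is `∑ q`. Removing a `d`-divisible bar preserves the difference
between the numbers of parts congruent to `r` and to `-r` modulo `d`, so the empty `d̄`-core of
`q` forces runners `i` and `d - i` to carry equally many beads; for balanced runners the
identity is elementary algebra.
-/

open Finset

variable {d : ℕ}

lemma sum_range_of_odd {M : Type*} [AddCommMonoid M] (hd : Odd d) (f : ℕ → M) :
    ∑ i ∈ range d, f i = f 0 + ∑ i ∈ Icc 1 ((d - 1) / 2), (f i + f (d - i)) := by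
  obtain ⟨m, rfl⟩ := hd
  rw [show (2 * m + 1 - 1) / 2 = m by omega, ← Ico_add_one_right_eq_Icc, sum_add_distrib,
    sum_Ico_reflect f 1 (by omega : m + 1 ≤ 2 * m + 1 + 1),
    show 2 * m + 1 + 1 - (m + 1) = m + 1 by omega, Nat.add_sub_cancel,
    ← sum_range_add_sum_Ico f (by omega : m + 1 ≤ 2 * m + 1),
    sum_range_eq_add_Ico f (by omega : 0 < m + 1), add_assoc]

lemma sum_card_filter_lt {α : Type*} [LinearOrder α] (X : Finset α) :
    ∑ x ∈ X, #{y ∈ X | y < x} = (#X).choose 2 := by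
  induction X using Finset.induction_on_max with
  | empty => simp
  | insert a X ha ih =>
    have haX : a ∉ X := fun h => lt_irrefl a (ha a h)
    have hbelow_a : {y ∈ insert a X | y < a} = X := by
      ext y
      simp only [mem_filter, mem_insert]
      exact ⟨fun ⟨hy, hya⟩ => hy.resolve_left hya.ne, fun hy => ⟨Or.inr hy, ha y hy⟩⟩
    have hbelow : ∀ x ∈ X, {y ∈ insert a X | y < x} = {y ∈ X | y < x} := fun x hx => by
      rw [filter_insert, if_neg (ha x hx).not_gt]
    rw [sum_insert haX, hbelow_a, sum_congr rfl fun x hx => congrArg card (hbelow x hx), ih,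
      card_insert_of_notMem haX, Nat.choose_succ_succ', Nat.choose_one_right, add_comm]

lemma sum_card_filter_lt_add_sum_card_filter_lt {α : Type*} [LinearOrder α] {A B : Finset α}
    (hAB : Disjoint A B) :
    ∑ a ∈ A, #{b ∈ B | b < a} + ∑ b ∈ B, #{a ∈ A | a < b} = #A * #B := by
  simp only [card_filter]
  rw [sum_comm (s := B), ← sum_add_distrib]
  refine sum_const_nat fun a ha => ?_
  rw [← sum_add_distrib]
  refine (sum_const_nat fun b hb => ?_).trans (mul_one _)
  have hab : a ≠ b := fun h => disjoint_left.1 hAB ha (h ▸ hb)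
  rcases hab.lt_or_gt with h | h <;> simp [h, h.not_gt]

lemma sum_map_sub_zipIdx_add {l : List ℕ} {k : ℕ} (hl : l.Pairwise (· < ·))
    (hk : ∀ x ∈ l, k ≤ x) :
    ((l.zipIdx k).map (fun p => p.1 - p.2)).sum + (l.length * k + l.length.choose 2) = l.sum := by
  induction l generalizing k with
  | nil => simp
  | cons a l ih =>
    obtain ⟨hal, hl⟩ := List.pairwise_cons.1 hl
    have hka := hk a List.mem_cons_self
    have ih := @ih (k + 1) hl fun x hx => hka.trans_lt (hal x hx)
    have hchoose : (l.length + 1).choose 2 = l.length.choose 2 + l.length := by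
      rw [Nat.choose_succ_succ', Nat.choose_one_right, add_comm]
    simp only [List.zipIdx_cons, List.map_cons, List.sum_cons, List.length_cons, hchoose,
      add_mul, mul_add, one_mul, mul_one] at ih ⊢
    omega

lemma sum_filter_pos (m : Multiset ℕ) : (m.filter (0 < ·)).sum = m.sum := by
  induction m using Multiset.induction_on with
  | empty => rfl
  | cons a m ih => by_cases ha : 0 < a <;> simp [ha, ih]; omega

lemma sum_partitionOfBetaSet_add_choose_two (Y : Finset ℕ) :
    (partitionOfBetaSet Y).sum + (#Y).choose 2 = ∑ y ∈ Y, y := by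
  have key := sum_map_sub_zipIdx_add (sortedLT_sort Y).pairwise fun x _ => Nat.zero_le x
  rw [length_sort, mul_zero, zero_add] at key
  rw [partitionOfBetaSet, sum_filter_pos, Multiset.sum_coe, key, ← Multiset.sum_coe,
    sort_eq, Finset.sum_eq_multiset_sum, Multiset.map_id']

def residueSign (d : ℕ) (r : ZMod d) (a : ℕ) : ℤ :=
  (if (a : ZMod d) = r then 1 else 0) - if (a : ZMod d) = -r then 1 else 0

lemma residueSign_of_dvd {r : ZMod d} {a : ℕ} (ha : d ∣ a) : residueSign d r a = 0 := by
  simp [residueSign, (ZMod.natCast_eq_zero_iff a d).2 ha, eq_comm (a := (0 : ZMod d))]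

lemma residueSign_add_of_dvd_add {r : ZMod d} {a b : ℕ} (hab : d ∣ a + b) :
    residueSign d r a + residueSign d r b = 0 := by
  have hb : (b : ZMod d) = -a :=
    eq_neg_of_add_eq_zero_right (by exact_mod_cast (ZMod.natCast_eq_zero_iff _ d).2 hab)
  simp only [residueSign, hb, neg_eq_iff_eq_neg, neg_neg]
  ring

lemma residueSign_sub_of_dvd {r : ZMod d} {a h : ℕ} (hdh : d ∣ h) (hle : h ≤ a) :
    residueSign d r (a - h) = residueSign d r a := by
  simp [residueSign, Nat.cast_sub hle, (ZMod.natCast_eq_zero_iff h d).2 hdh]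

lemma sum_residueSign_of_removeDBar (r : ZMod d) {s t : Finset ℕ} (hst : RemoveDBar d s t) :
    ∑ a ∈ t, residueSign d r a = ∑ a ∈ s, residueSign d r a := by
  obtain ⟨h, hdh, ⟨a, ha, b, hb, hab, rfl, rfl⟩ | ⟨a, ha, -, hle, hfree, rfl⟩⟩ := hst
  · rw [← sum_erase_add _ _ ha, ← sum_erase_add _ _ (mem_erase.2 ⟨hab.symm, hb⟩), add_assoc,
      add_comm (residueSign d r b), residueSign_add_of_dvd_add hdh, add_zero]
  · split_ifs with hha
    · rw [← sum_erase_add _ _ ha, residueSign_of_dvd (hha ▸ hdh), add_zero]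
    · rw [sum_insert fun h' => hfree (mem_of_mem_erase h'), residueSign_sub_of_dvd hdh hle,
        add_comm, sum_erase_add _ _ ha]

lemma sum_residueSign_eq_zero_of_isBarCore_empty (r : ZMod d) {q : Finset ℕ}
    (hq : IsBarCore d q ∅) : ∑ a ∈ q, residueSign d r a = 0 := by
  suffices ∀ t, Relation.ReflTransGen (RemoveDBar d) q t →
      ∑ a ∈ t, residueSign d r a = ∑ a ∈ q, residueSign d r a by
    simpa using (this ∅ hq.1).symm
  intro t hqt
  induction hqt with
  | refl => rfl
  | tail _ hstep ih => rw [sum_residueSign_of_removeDBar r hstep, ih]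

lemma card_filter_eq_card_filter_neg_of_isBarCore_empty (r : ZMod d) {q : Finset ℕ}
    (hq : IsBarCore d q ∅) :
    #{a ∈ q | ((a : ℕ) : ZMod d) = r} = #{a ∈ q | ((a : ℕ) : ZMod d) = -r} := by
  have := sum_residueSign_eq_zero_of_isBarCore_empty r hq
  simp only [residueSign, sum_sub_distrib, sum_boole] at this
  exact_mod_cast sub_eq_zero.1 this

lemma mem_runnerSet {i : ℕ} (hi : i < d) {t : Finset ℕ} {x : ℕ} :
    x ∈ runnerSet d i t ↔ i + d * x ∈ t := by
  have hd : 0 < d := by omega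
  simp only [runnerSet, mem_image, mem_filter]
  constructor
  · rintro ⟨a, ⟨ha, rfl⟩, rfl⟩
    rwa [Nat.mod_add_div]
  · intro h
    refine ⟨i + d * x, ⟨h, ?_⟩, ?_⟩
    · rw [Nat.add_mul_mod_self_left, Nat.mod_eq_of_lt hi]
    · rw [Nat.add_mul_div_left _ _ hd, Nat.div_eq_of_lt hi, zero_add]

lemma div_injOn_filter_mod_eq (t : Finset ℕ) (i : ℕ) :
    Set.InjOn (· / d) (({a ∈ t | a % d = i} : Finset ℕ) : Set ℕ) := by
  intro a ha b hb hab
  rw [mem_coe, mem_filter] at ha hb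
  rw [← Nat.mod_add_div a d, ← Nat.mod_add_div b d, ha.2, hb.2]
  exact congrArg (i + d * ·) hab

lemma card_runnerSet (t : Finset ℕ) (i : ℕ) :
    #(runnerSet d i t) = #{a ∈ t | a % d = i} :=
  card_image_of_injOn (div_injOn_filter_mod_eq t i)

lemma sum_eq_sum_range_sum_runnerSet {M : Type*} [AddCommMonoid M] (hd : 0 < d)
    (t : Finset ℕ) (g : ℕ → M) :
    ∑ a ∈ t, g a = ∑ i ∈ range d, ∑ x ∈ runnerSet d i t, g (i + d * x) := by
  rw [← sum_fiberwise_of_maps_to (g := (· % d)) (t := range d)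
    fun a _ => mem_range.2 (Nat.mod_lt a hd)]
  refine sum_congr rfl fun i _ => ?_
  rw [runnerSet, sum_image (div_injOn_filter_mod_eq t i)]
  refine sum_congr rfl fun a ha => ?_
  rw [← (mem_filter.1 ha).2, Nat.mod_add_div]

lemma card_runnerSet_eq_of_isBarCore_empty {q : Finset ℕ} (hq : IsBarCore d q ∅) {i : ℕ}
    (hi : 0 < i) (hid : i < d) : #(runnerSet d i q) = #(runnerSet d (d - i) q) := by
  have hneg : ((d - i : ℕ) : ZMod d) = -(i : ZMod d) := by
    rw [Nat.cast_sub hid.le, ZMod.natCast_self, zero_sub]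
  rw [card_runnerSet, card_runnerSet]
  convert card_filter_eq_card_filter_neg_of_isBarCore_empty (i : ZMod d) hq using 3 with a
  · rw [ZMod.natCast_eq_natCast_iff', Nat.mod_eq_of_lt hid]
  · rw [← hneg, ZMod.natCast_eq_natCast_iff', Nat.mod_eq_of_lt (Nat.sub_lt (by omega) hi)]

def betaSize (X : Finset ℕ) : ℕ := ∑ x ∈ X, #{z ∈ range x | z ∉ X}

lemma betaSize_add_choose_two (X : Finset ℕ) : betaSize X + (#X).choose 2 = ∑ x ∈ X, x := by
  rw [betaSize, ← sum_card_filter_lt, ← sum_add_distrib]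
  refine sum_congr rfl fun x _ => ?_
  have hbelow : {z ∈ range x | z ∈ X} = {y ∈ X | y < x} := by
    ext y
    simp only [mem_filter, mem_range, and_comm]
  rw [← hbelow, add_comm, card_filter_add_card_filter_not, card_range]

lemma filter_mem_range_of_lt {B : Finset ℕ} {N : ℕ} (hB : ∀ b ∈ B, b < N) :
    (range N).filter (fun b => b ∈ B) = B :=
  filter_mem_eq_inter.trans (inter_eq_right.2 fun b hb => mem_range.2 (hB b hb))

lemma sum_reflect_gaps_add_mul_card {B : Finset ℕ} {N : ℕ} (hB : ∀ b ∈ B, b < N) :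
    ∑ b ∈ (range N).filter (fun b => b ∉ B), (N - 1 - b) + N * #B
      = N.choose 2 + ∑ b ∈ B, b + #B := by
  have hall : ∑ b ∈ (range N).filter (fun b => b ∉ B), (N - 1 - b) + ∑ b ∈ B, (N - 1 - b)
      = N.choose 2 := by
    have := sum_filter_add_sum_filter_not (range N) (fun b => b ∉ B) (N - 1 - ·)
    simp only [not_not, filter_mem_range_of_lt hB] at this
    rw [this, sum_range_reflect (fun b => b), sum_range_id, Nat.choose_two_right]
  have hshift : ∑ b ∈ B, ((N - 1 - b) + b + 1) = N * #B :=
    (sum_const_nat fun b hb => by have := hB b hb; omega).trans (mul_comm _ _)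
  simp only [sum_add_distrib, sum_const, smul_eq_mul, mul_one] at hshift
  omega

lemma sum_partitionOfBetaSet_charged (A B : Finset ℕ) {N : ℕ} (hB : ∀ b ∈ B, b < N) :
    (partitionOfBetaSet (A.image (fun a => N + a) ∪
        ((range N).filter (fun b => b ∉ B)).image (fun b => N - 1 - b))).sum
      = betaSize A + betaSize B + #A * #B := by
  set G := (range N).filter (fun b => b ∉ B)
  have hG : ∀ b ∈ G, b < N := fun b hb => mem_range.1 (mem_filter.1 hb).1
  have hdisj : Disjoint (A.image (fun a => N + a)) (G.image (fun b => N - 1 - b)) := by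
    simp only [disjoint_left, mem_image, not_exists, not_and]
    rintro _ ⟨a, -, rfl⟩ b hb h
    have := hG b hb
    omega
  have hinjG : Set.InjOn (fun b => N - 1 - b) G := fun x hx y hy hxy => by
    have := hG x hx; have := hG y hy
    simp only at hxy
    omega
  have hcard : #G + #B = N := by
    rw [← filter_mem_range_of_lt hB, add_comm, card_filter_add_card_filter_not, card_range]
  have hgaps := sum_reflect_gaps_add_mul_card hB
  have hY := sum_partitionOfBetaSet_add_choose_two
    (A.image (fun a => N + a) ∪ G.image (fun b => N - 1 - b))
  rw [card_union_of_disjoint hdisj, sum_union hdisj,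
    card_image_of_injective _ (add_right_injective N), card_image_of_injOn hinjG,
    sum_image (add_right_injective N).injOn, sum_image hinjG,
    sum_add_distrib, sum_const, smul_eq_mul] at hY
  have hβA := betaSize_add_choose_two A
  have hβB := betaSize_add_choose_two B
  qify at hY hβA hβB hgaps hcard ⊢
  push_cast [Nat.cast_choose_two] at hY hβA hβB hgaps
  rw [← hcard] at hY hgaps
  linear_combination hY - hβA - hβB + hgaps

lemma sum_barQuotComp (d i : ℕ) (t : Finset ℕ) :
    (barQuotComp d i t).sum = betaSize (runnerSet d i t) + betaSize (runnerSet d (d - i) t)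
      + #(runnerSet d i t) * #(runnerSet d (d - i) t) :=
  sum_partitionOfBetaSet_charged _ _ fun _ hb => Nat.lt_succ_of_le (le_sup (f := id) hb)

lemma dvd_add_iff_mod_eq (hd : 0 < d) (a b : ℕ) : d ∣ a + b ↔ b % d = (d - a % d) % d := by
  rw [← ZMod.natCast_eq_zero_iff, ← ZMod.natCast_eq_natCast_iff',
    Nat.cast_sub (Nat.mod_lt a hd).le, ZMod.natCast_self, ZMod.natCast_mod, Nat.cast_add,
    zero_sub, eq_neg_iff_add_eq_zero, add_comm]

def partBars (t : Finset ℕ) (a : ℕ) : Multiset ℕ :=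
  ((Multiset.range a).map (· + 1)).filter (fun h => a - h ∉ t)

def pairBars (t : Finset ℕ) (a : ℕ) : Multiset ℕ :=
  (t.filter (fun b => b < a)).val.map (fun b => a + b)

lemma barMultisetF_eq (t : Finset ℕ) :
    barMultisetF t = t.val.bind (partBars t) + t.val.bind (pairBars t) := rfl

lemma card_filter_dvd_bind (t : Finset ℕ) (f : ℕ → Multiset ℕ) :
    Multiset.card ((t.val.bind f).filter (d ∣ ·))
      = ∑ a ∈ t, Multiset.card ((f a).filter (d ∣ ·)) := by
  rw [Multiset.filter_bind, Multiset.card_bind]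
  rfl

lemma card_filter_dvd_partBars {i : ℕ} (hi : i < d) (t : Finset ℕ) (x : ℕ) :
    Multiset.card ((partBars t (i + d * x)).filter (d ∣ ·))
      = #{z ∈ range x | i + d * z ∉ t} := by
  rw [partBars, Multiset.filter_filter, Multiset.filter_map, Multiset.card_map]
  change #{k ∈ range (i + d * x) | d ∣ k + 1 ∧ i + d * x - (k + 1) ∉ t} = _
  symm
  -- the gap at position `z` receives the bead at `x` through the bar of length `d * (x - z)`
  refine card_bij (fun z _ => d * (x - z) - 1) ?_ ?_ ?_
  · intro z hz
    simp only [mem_filter, mem_range] at hz ⊢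
    have hsplit : d * (x - z) + d * z = d * x := by rw [← mul_add, Nat.sub_add_cancel hz.1.le]
    have hpos : d ≤ d * (x - z) := Nat.le_mul_of_pos_right d (by omega)
    refine ⟨by omega, ⟨x - z, by omega⟩, by convert hz.2 using 2; omega⟩
  · intro z₁ hz₁ z₂ hz₂ h
    simp only [mem_filter, mem_range] at hz₁ hz₂
    have h₁ : d ≤ d * (x - z₁) := Nat.le_mul_of_pos_right d (by omega)
    have h₂ : d ≤ d * (x - z₂) := Nat.le_mul_of_pos_right d (by omega)
    have := Nat.eq_of_mul_eq_mul_left (by omega : 0 < d)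
      (by omega : d * (x - z₁) = d * (x - z₂))
    omega
  · intro k hk
    simp only [mem_filter, mem_range] at hk
    obtain ⟨hka, ⟨c, hc⟩, hfree⟩ := hk
    have hcx : c ≤ x := Nat.lt_succ_iff.1 <| Nat.lt_of_mul_lt_mul_left (a := d) <| by
      rw [Nat.mul_succ]; omega
    have hsplit : d * (x - c) + d * c = d * x := by rw [← mul_add, Nat.sub_add_cancel hcx]
    have hc0 : c ≠ 0 := by rintro rfl; omega
    refine ⟨x - c, ?_, ?_⟩
    · simp only [mem_filter, mem_range]
      exact ⟨by omega, by convert hfree using 2; omega⟩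
    · rw [Nat.sub_sub_self hcx]
      omega

lemma card_filter_dvd_bind_partBars (hd : 0 < d) (t : Finset ℕ) :
    Multiset.card ((t.val.bind (partBars t)).filter (d ∣ ·))
      = ∑ i ∈ range d, betaSize (runnerSet d i t) := by
  rw [card_filter_dvd_bind, sum_eq_sum_range_sum_runnerSet hd]
  refine sum_congr rfl fun i hi => sum_congr rfl fun x _ => ?_
  rw [card_filter_dvd_partBars (mem_range.1 hi)]
  simp only [mem_runnerSet (mem_range.1 hi)]

lemma card_filter_dvd_pairBars (t : Finset ℕ) (a : ℕ) :
    Multiset.card ((pairBars t a).filter (d ∣ ·)) = #{b ∈ t | b < a ∧ d ∣ a + b} := by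
  rw [pairBars, Multiset.filter_map, Multiset.card_map, ← filter_filter]
  rfl

lemma sum_card_filter_lt_and_dvd_add (hd : Odd d) (t : Finset ℕ) :
    ∑ a ∈ t, #{b ∈ t | b < a ∧ d ∣ a + b}
      = (#(runnerSet d 0 t)).choose 2
        + ∑ i ∈ Icc 1 ((d - 1) / 2), #(runnerSet d i t) * #(runnerSet d (d - i) t) := by
  have hd0 : 0 < d := hd.pos
  have hpartners : ∀ i, ∀ a ∈ t.filter (· % d = i),
      {b ∈ t | b < a ∧ d ∣ a + b} = {b ∈ t.filter (· % d = (d - i) % d) | b < a} := by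
    intro i a ha
    ext b
    rw [mem_filter] at ha
    simp only [mem_filter, dvd_add_iff_mod_eq hd0, ha.2]
    tauto
  rw [← sum_fiberwise_of_maps_to (g := (· % d)) (t := range d)
    fun a _ => mem_range.2 (Nat.mod_lt a hd0), sum_range_of_odd hd]
  congr 1
  · rw [card_runnerSet, ← sum_card_filter_lt]
    refine sum_congr rfl fun a ha => ?_
    rw [hpartners 0 a ha, Nat.sub_zero, Nat.mod_self]
  · refine sum_congr rfl fun i hi => ?_
    rw [mem_Icc] at hi
    have hdisj : Disjoint (t.filter (· % d = i)) (t.filter (· % d = d - i)) :=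
      disjoint_filter.2 fun a _ h₁ h₂ => by omega
    rw [card_runnerSet, card_runnerSet,
      ← sum_card_filter_lt_add_sum_card_filter_lt hdisj]
    congr 1 <;> refine sum_congr rfl fun a ha => ?_
    · rw [hpartners i a ha, Nat.mod_eq_of_lt (by omega)]
    · rw [hpartners (d - i) a ha, Nat.sub_sub_self (by omega), Nat.mod_eq_of_lt (by omega)]

lemma card_filter_dvd_barMultisetF (hd : Odd d) (t : Finset ℕ) :
    Multiset.card ((barMultisetF t).filter (d ∣ ·))
      = ∑ x ∈ runnerSet d 0 t, x + ∑ i ∈ Icc 1 ((d - 1) / 2), (barQuotComp d i t).sum := by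
  rw [barMultisetF_eq, Multiset.filter_add, Multiset.card_add,
    card_filter_dvd_bind_partBars hd.pos, card_filter_dvd_bind,
    sum_congr rfl fun a _ => card_filter_dvd_pairBars t a, sum_card_filter_lt_and_dvd_add hd,
    sum_range_of_odd hd, ← betaSize_add_choose_two]
  simp only [sum_barQuotComp, sum_add_distrib]
  ring

lemma mul_betaSize_add_betaSize_add_card_mul_card {A B : Finset ℕ} (hAB : #A = #B) {i : ℕ}
    (hi : i ≤ d) :
    d * (betaSize A + betaSize B + #A * #B)
      = ∑ x ∈ A, (i + d * x) + ∑ y ∈ B, (d - i + d * y) := by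
  have hA := betaSize_add_choose_two A
  have hB := betaSize_add_choose_two B
  simp only [sum_add_distrib, sum_const, smul_eq_mul]
  rw [← mul_sum, ← mul_sum, hAB]
  rw [hAB] at hA
  qify [hi] at hA hB ⊢
  push_cast [Nat.cast_choose_two] at hA hB
  linear_combination (d : ℚ) * hA + (d : ℚ) * hB

lemma mul_card_filter_dvd_barMultisetF_of_card_runnerSet_eq (hd : Odd d) {t : Finset ℕ}
    (hbal : ∀ i ∈ Icc 1 ((d - 1) / 2), #(runnerSet d i t) = #(runnerSet d (d - i) t)) :
    d * Multiset.card ((barMultisetF t).filter (d ∣ ·)) = t.sum id := by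
  rw [card_filter_dvd_barMultisetF hd, show t.sum id = ∑ a ∈ t, a from rfl,
    sum_eq_sum_range_sum_runnerSet hd.pos t, sum_range_of_odd hd, mul_add, mul_sum, mul_sum]
  congr 1
  · simp only [zero_add]
  · refine sum_congr rfl fun i hi => ?_
    rw [sum_barQuotComp]
    exact mul_betaSize_add_betaSize_add_card_mul_card (hbal i hi) (by rw [mem_Icc] at hi; omega)

lemma card_filter_dvd_barMultisetF_eq_of_sameBarQuotient (hd : Odd d) {s t : Finset ℕ}
    (hst : SameBarQuotient d s t) :
    Multiset.card ((barMultisetF s).filter (d ∣ ·))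
      = Multiset.card ((barMultisetF t).filter (d ∣ ·)) := by
  rw [card_filter_dvd_barMultisetF hd, card_filter_dvd_barMultisetF hd, hst.1]
  exact congrArg _ <| sum_congr rfl fun i hi => by
    rw [hst.2 i (mem_Icc.1 hi).1 (mem_Icc.1 hi).2]

theorem card_divisible_bars_general (d : ℕ) (hd : Odd d) (s q : Finset ℕ)
    (hq : IsBarQuotientPartition d s q) :
    d * Multiset.card ((barMultisetF s).filter (fun b => d ∣ b)) = q.sum id := by
  rw [card_filter_dvd_barMultisetF_eq_of_sameBarQuotient hd hq.2]
  refine mul_card_filter_dvd_barMultisetF_of_card_runnerSet_eq hd fun i hi => ?_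
  rw [mem_Icc] at hi
  exact card_runnerSet_eq_of_isBarCore_empty hq.1 hi.1 (by omega)

/-- `d` times the number of bar lengths of `λ` divisible by `d` equals the
size of the `d̄`-quotient partition. -/
theorem card_divisible_bars (d : ℕ) (hd : Odd d) (h3 : 3 ≤ d) (s q : Finset ℕ)
    (hs : 0 ∉ s) (hq : IsBarQuotientPartition d s q) :
    d * Multiset.card ((barMultisetF s).filter (fun b => d ∣ b)) = q.sum id :=
  card_divisible_bars_general d hd s q hq

end BarPartitions
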